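/- arXiv:2202.13886 — 2 statements merged into one kernel-verified Lean document; each statement's English description precedes it below -/
import Mathlib

section
/- Let (Ω, F, P) be a probability space, G a sub-σ-algebra of F, 1 < p < ∞ with conjugate exponent q, and X an ℝⁿ-valued random vector in L^p. Then the essential supremum of E[|X|^p | G]^{1/p} equals the smallest constant C such that ‖E[X · Y | G]‖_{L^q} ≤ C ‖Y‖_{L^q} holds for all ℝⁿ-valued random vectors Y ∈ L^q. -/
/-!
Write `h = E[|X|^p | G]` and `M = ess sup h`.

`M^{1/p}` is admissible by a conditional Hölder inequality
`|E[X · Y | G]| ≤ h^{1/p} E[|Y|^q | G]^{1/q}`: condition Young's inequality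
`|x · y| ≤ e^t |x|^p / p + e^{(1-q)t} |y|^q / q` for every rational `t` simultaneously and
minimise over `t` pointwise. Bounding `h` by `M` and using `∫ E[|Y|^q | G] = ∫ |Y|^q` gives
`‖E[X · Y | G]‖_q ≤ M^{1/p} ‖Y‖_q`.

Conversely, if `h > t` on a `G`-measurable set `A` of positive measure, the test vector
`Y = 1_A |X|^{p-2} X` satisfies `E[X · Y | G] = 1_A h` and `‖Y‖_q^q = ∫_A |X|^p = ∫_A h`, so
`t^{q-1} ∫_A h ≤ ‖1_A h‖_q^q ≤ C^q ∫_A h`, i.e. `t ≤ C^p`.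
-/

open MeasureTheory Filter
open scoped ENNReal RealInnerProductSpace

open Real in
theorem le_rpow_mul_rpow_of_forall_rat_le {p q A B c : ℝ} (hpq : p.HolderConjugate q)
    (hA : 0 ≤ A) (hB : 0 ≤ B)
    (h : ∀ t : ℚ, c ≤ exp t / p * A + exp ((1 - q) * t) / q * B) :
    c ≤ A ^ (1 / p) * B ^ (1 / q) := by
  have hp := hpq.pos
  have hq := hpq.symm.pos
  have h' (t : ℝ) : c ≤ exp t / p * A + exp ((1 - q) * t) / q * B :=
    Rat.denseRange_cast.induction_on t (isClosed_le continuous_const (by fun_prop)) h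
  have hε (ε : ℝ) (hε : 0 < ε) : c ≤ (A + ε) ^ (1 / p) * (B + ε) ^ (1 / q) := by
    have hA' : 0 < A + ε := by positivity
    have hB' : 0 < B + ε := by positivity
    set a := log (A + ε)
    set b := log (B + ε)
    -- the two Young terms balance at `t = (b - a) / q`
    set t := (b - a) / q
    have hpq' : 1 / p = 1 - 1 / q :=
      eq_sub_of_add_eq (by rw [one_div, one_div, hpq.inv_add_inv_eq_one])
    have e₁ : exp t * (A + ε) = exp (a * (1 / p) + b * (1 / q)) := by
      rw [← exp_log hA', ← exp_add, hpq']; congr 1; ring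
    have e₂ : exp ((1 - q) * t) * (B + ε) = exp (a * (1 / p) + b * (1 / q)) := by
      rw [← exp_log hB', ← exp_add, hpq']; congr 1; simp only [t, b]; field_simp; ring
    calc c ≤ exp t / p * A + exp ((1 - q) * t) / q * B := h' t
      _ ≤ exp t / p * (A + ε) + exp ((1 - q) * t) / q * (B + ε) := by
        gcongr <;> linarith
      _ = (A + ε) ^ (1 / p) * (B + ε) ^ (1 / q) := by
        rw [div_mul_eq_mul_div, e₁, div_mul_eq_mul_div, e₂, rpow_def_of_pos hA',
          rpow_def_of_pos hB', ← exp_add]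
        linear_combination exp (a * (1 / p) + b * (1 / q)) * hpq.inv_add_inv_eq_one
  have hcont : Continuous fun ε : ℝ => (A + ε) ^ (1 / p) * (B + ε) ^ (1 / q) :=
    ((continuous_rpow_const (by positivity)).comp (continuous_const_add A)).mul
      ((continuous_rpow_const (by positivity)).comp (continuous_const_add B))
  simpa using ge_of_tendsto ((hcont.tendsto 0).mono_left nhdsWithin_le_nhds)
    (eventually_nhdsWithin_of_forall (s := Set.Ioi 0) hε)

section
variable {E : Type*} [NormedAddCommGroup E] [InnerProductSpace ℝ E]

open Real in
theorem abs_real_inner_le_exp_mul_rpow_add {p q : ℝ} (hpq : p.HolderConjugate q) (x y : E)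
    (t : ℝ) : |⟪x, y⟫| ≤ exp t / p * ‖x‖ ^ p + exp ((1 - q) * t) / q * ‖y‖ ^ q := by
  have hp := hpq.pos
  calc |⟪x, y⟫| ≤ ‖x‖ * ‖y‖ := abs_real_inner_le_norm x y
    _ = (exp (t / p) * ‖x‖) * (exp (-t / p) * ‖y‖) := by
      rw [mul_mul_mul_comm, ← exp_add, neg_div, add_neg_cancel, exp_zero, one_mul]
    _ ≤ (exp (t / p) * ‖x‖) ^ p / p + (exp (-t / p) * ‖y‖) ^ q / q :=
      young_inequality_of_nonneg (by positivity) (by positivity) hpq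
    _ = exp t / p * ‖x‖ ^ p + exp ((1 - q) * t) / q * ‖y‖ ^ q := by
      rw [mul_rpow (exp_pos _).le (norm_nonneg _), mul_rpow (exp_pos _).le (norm_nonneg _),
        ← exp_mul, ← exp_mul, div_mul_cancel₀ t hp.ne']
      have : -t / p * q = (1 - q) * t := by
        field_simp; linear_combination t * hpq.mul_eq_add
      rw [this]; ring

theorem real_inner_rpow_smul_self {p : ℝ} (hp : p ≠ 0) (x : E) :
    ⟪x, ‖x‖ ^ (p - 2) • x⟫ = ‖x‖ ^ p := by
  rw [real_inner_smul_right, real_inner_self_eq_norm_sq, ← Real.rpow_natCast,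
    ← Real.rpow_add' (norm_nonneg x) (by simpa using hp)]
  norm_num

theorem norm_rpow_smul_self {p : ℝ} (hp : p ≠ 1) (x : E) :
    ‖‖x‖ ^ (p - 2) • x‖ = ‖x‖ ^ (p - 1) := by
  rw [norm_smul, Real.norm_of_nonneg (by positivity),
    ← Real.rpow_add_one' (norm_nonneg x) (by contrapose! hp; linarith)]
  ring_nf

variable {Ω : Type*} {m m0 : MeasurableSpace Ω} {μ : Measure Ω}

theorem MeasureTheory.MemLp.integrable_norm_rpow_ofReal {F : Type*} [NormedAddCommGroup F]
    {f : Ω → F} {p : ℝ} (hf : MemLp f (.ofReal p) μ) (hp : 0 < p) :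
    Integrable (fun ω => ‖f ω‖ ^ p) μ := by
  simpa [hp.le] using hf.integrable_norm_rpow (by simpa using hp) ENNReal.ofReal_ne_top

theorem condExp_smul_add_smul {F : Type*} [NormedAddCommGroup F] [NormedSpace ℝ F]
    [CompleteSpace F] {f g : Ω → F} (hf : Integrable f μ) (hg : Integrable g μ) (a b : ℝ) :
    μ[a • f + b • g | m] =ᵐ[μ] a • μ[f | m] + b • μ[g | m] :=
  (condExp_add (hf.smul a) (hg.smul b) m).trans ((condExp_smul a f m).add (condExp_smul b g m))

open Real in
theorem abs_condExp_inner_le_condExp_rpow_mul {p q : ℝ} (hpq : p.HolderConjugate q)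
    {X Y : Ω → E} (hX : MemLp X (.ofReal p) μ) (hY : MemLp Y (.ofReal q) μ) :
    ∀ᵐ ω ∂μ, |μ[fun ω => ⟪X ω, Y ω⟫ | m] ω| ≤
      μ[fun ω => ‖X ω‖ ^ p | m] ω ^ (1 / p) * μ[fun ω => ‖Y ω‖ ^ q | m] ω ^ (1 / q) := by
  have intX := hX.integrable_norm_rpow_ofReal hpq.pos
  have intY := hY.integrable_norm_rpow_ofReal hpq.symm.pos
  set young : ℝ → Ω → ℝ := fun t =>
    (exp t / p) • (fun ω => ‖X ω‖ ^ p) + (exp ((1 - q) * t) / q) • (fun ω => ‖Y ω‖ ^ q)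
  have young_ge (t : ℝ) (ω : Ω) : |⟪X ω, Y ω⟫| ≤ young t ω :=
    abs_real_inner_le_exp_mul_rpow_add hpq (X ω) (Y ω) t
  have int_young (t : ℝ) : Integrable (young t) μ := (intX.smul _).add (intY.smul _)
  have intXY : Integrable (fun ω => ⟪X ω, Y ω⟫) μ :=
    (int_young 0).mono' (hX.1.inner hY.1) (.of_forall (young_ge 0))
  have hyoung (t : ℚ) : ∀ᵐ ω ∂μ, |μ[fun ω => ⟪X ω, Y ω⟫ | m] ω| ≤
      exp t / p * μ[fun ω => ‖X ω‖ ^ p | m] ω +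
        exp ((1 - q) * t) / q * μ[fun ω => ‖Y ω‖ ^ q | m] ω := by
    filter_upwards [abs_condExp_ae_le_condExp_abs (m := m) (μ := μ) fun ω => ⟪X ω, Y ω⟫,
      condExp_mono (m := m) intXY.abs (int_young t) (.of_forall (young_ge t)),
      condExp_smul_add_smul (m := m) intX intY (exp t / p) (exp ((1 - q) * t) / q)]
      with ω h₁ h₂ h₃
    exact h₁.trans (h₂.trans h₃.le)
  filter_upwards [ae_all_iff.2 hyoung,
    condExp_nonneg (m := m) (.of_forall fun ω => rpow_nonneg (norm_nonneg (X ω)) p),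
    condExp_nonneg (m := m) (.of_forall fun ω => rpow_nonneg (norm_nonneg (Y ω)) q)]
    with ω hω hXω hYω
  exact le_rpow_mul_rpow_of_forall_rat_le hpq hXω hYω hω

theorem eLpNorm_condExp_norm_rpow_rpow_inv_le {F : Type*} [NormedAddCommGroup F] {q : ℝ}
    (hq : 0 < q) (Y : Ω → F) :
    eLpNorm (fun ω => μ[fun ω => ‖Y ω‖ ^ q | m] ω ^ (1 / q)) (.ofReal q) μ ≤
      eLpNorm Y (.ofReal q) μ := by
  set g := μ[fun ω => ‖Y ω‖ ^ q | m]
  have hg : 0 ≤ᵐ[μ] g := condExp_nonneg (.of_forall fun ω => Real.rpow_nonneg (norm_nonneg _) q)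
  calc eLpNorm (fun ω => g ω ^ (1 / q)) (.ofReal q) μ
      = eLpNorm (fun ω => ‖g ω‖ ^ (1 / q)) (.ofReal q) μ :=
        eLpNorm_congr_ae (by filter_upwards [hg] with ω hω; rw [Real.norm_of_nonneg hω])
    _ = eLpNorm g 1 μ ^ (1 / q) := by
      rw [eLpNorm_norm_rpow g (by positivity), ← ENNReal.ofReal_mul hq.le,
        mul_one_div_cancel hq.ne', ENNReal.ofReal_one]
    _ ≤ eLpNorm (fun ω => ‖Y ω‖ ^ q) 1 μ ^ (1 / q) := by
      gcongr; exact eLpNorm_condExp_le_eLpNorm _ le_rfl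
    _ = eLpNorm Y (.ofReal q) μ := by
      rw [eLpNorm_norm_rpow Y hq, one_mul, ← ENNReal.rpow_mul, mul_one_div_cancel hq.ne',
        ENNReal.rpow_one]

theorem eLpNorm_condExp_inner_le_essSup_mul (hm : m ≤ m0) {p q : ℝ}
    (hpq : p.HolderConjugate q) {X Y : Ω → E} (hX : MemLp X (.ofReal p) μ)
    (hY : MemLp Y (.ofReal q) μ) :
    eLpNorm (μ[fun ω => ⟪X ω, Y ω⟫ | m]) (.ofReal q) μ ≤
      essSup (fun ω => ENNReal.ofReal (μ[fun ω => ‖X ω‖ ^ p | m] ω)) μ ^ (1 / p) *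
        eLpNorm Y (.ofReal q) μ := by
  set gX := μ[fun ω => ‖X ω‖ ^ p | m]
  set gY := μ[fun ω => ‖Y ω‖ ^ q | m]
  have hp := hpq.pos
  have hq := hpq.symm.pos
  calc eLpNorm (μ[fun ω => ⟪X ω, Y ω⟫ | m]) (.ofReal q) μ
      ≤ essSup (fun ω => ENNReal.ofReal (gX ω)) μ ^ (1 / p) *
          eLpNorm (fun ω => gY ω ^ (1 / q)) (.ofReal q) μ := by
        refine eLpNorm_le_mul_eLpNorm_of_ae_le_mul'' _
          ((stronglyMeasurable_condExp.mono hm).measurable.pow_const _).aestronglyMeasurable ?_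
        filter_upwards [abs_condExp_inner_le_condExp_rpow_mul hpq hX hY,
          ENNReal.ae_le_essSup (fun ω => ENNReal.ofReal (gX ω)),
          condExp_nonneg (m := m) (.of_forall fun ω => Real.rpow_nonneg (norm_nonneg (X ω)) p),
          condExp_nonneg (m := m) (.of_forall fun ω => Real.rpow_nonneg (norm_nonneg (Y ω)) q)]
          with ω hω hess hXω hYω
        rw [Real.enorm_eq_ofReal_abs, Real.enorm_eq_ofReal (Real.rpow_nonneg hYω _)]
        calc ENNReal.ofReal |μ[fun ω => ⟪X ω, Y ω⟫ | m] ω|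
            ≤ ENNReal.ofReal (gX ω ^ (1 / p) * gY ω ^ (1 / q)) := ENNReal.ofReal_le_ofReal hω
          _ = ENNReal.ofReal (gX ω) ^ (1 / p) * ENNReal.ofReal (gY ω ^ (1 / q)) := by
            rw [ENNReal.ofReal_mul (Real.rpow_nonneg hXω _),
              ENNReal.ofReal_rpow_of_nonneg hXω (by positivity)]
          _ ≤ _ := by gcongr
    _ ≤ _ := by gcongr; exact eLpNorm_condExp_norm_rpow_rpow_inv_le hq Y

theorem eLpNorm_one_condExp_of_nonneg (hm : m ≤ m0) [SigmaFinite (μ.trim hm)] {f : Ω → ℝ}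
    (hf : Integrable f μ) (hf₀ : 0 ≤ᵐ[μ] f) : eLpNorm (μ[f | m]) 1 μ = eLpNorm f 1 μ := by
  have h₀ : 0 ≤ᵐ[μ] μ[f | m] := condExp_nonneg hf₀
  rw [eLpNorm_one_eq_lintegral_enorm, eLpNorm_one_eq_lintegral_enorm,
    lintegral_congr_ae (h₀.mono fun ω hω => Real.enorm_of_nonneg hω),
    lintegral_congr_ae (hf₀.mono fun ω hω => Real.enorm_of_nonneg hω),
    ← ofReal_integral_eq_lintegral_ofReal integrable_condExp h₀,
    ← ofReal_integral_eq_lintegral_ofReal hf hf₀, integral_condExp hm]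

theorem ofReal_rpow_mul_eLpNorm_one_le_eLpNorm_rpow {s : Set Ω} {f : Ω → ℝ} {t q : ℝ}
    (ht : 0 ≤ t) (hq : 1 ≤ q) (hf : ∀ ω ∈ s, t ≤ f ω) :
    ENNReal.ofReal t ^ (q - 1) * eLpNorm (s.indicator f) 1 μ ≤
      eLpNorm (s.indicator f) (.ofReal q) μ ^ q := by
  have hpt (ω : Ω) : t ^ (q - 1) * ‖s.indicator f ω‖ ≤ ‖s.indicator f ω‖ ^ q := by
    by_cases hω : ω ∈ s
    · have hfω : 0 ≤ f ω := ht.trans (hf ω hω)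
      rw [Set.indicator_of_mem hω, Real.norm_of_nonneg hfω]
      calc t ^ (q - 1) * f ω ≤ f ω ^ (q - 1) * f ω := by
            gcongr; exact hf ω hω
        _ = f ω ^ q := by rw [← Real.rpow_add_one' hfω (by linarith), sub_add_cancel]
    · simp [Set.indicator_of_notMem hω, Real.zero_rpow (by linarith : q ≠ 0)]
  calc ENNReal.ofReal t ^ (q - 1) * eLpNorm (s.indicator f) 1 μ
      = eLpNorm (fun ω => t ^ (q - 1) * ‖s.indicator f ω‖) 1 μ := by
        rw [show (fun ω => t ^ (q - 1) * ‖s.indicator f ω‖) =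
            t ^ (q - 1) • fun ω => ‖s.indicator f ω‖ from rfl, eLpNorm_const_smul, eLpNorm_norm,
          Real.enorm_of_nonneg (by positivity), ENNReal.ofReal_rpow_of_nonneg ht (by linarith)]
    _ ≤ eLpNorm (fun ω => ‖s.indicator f ω‖ ^ q) 1 μ :=
        eLpNorm_mono_real fun ω => by
          rw [Real.norm_of_nonneg (by positivity)]; exact hpt ω
    _ = eLpNorm (s.indicator f) (.ofReal q) μ ^ q := by
        rw [eLpNorm_norm_rpow _ (by linarith), one_mul]

theorem memLp_indicator_rpow_smul_self {p q : ℝ} (hpq : p.HolderConjugate q) {X : Ω → E}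
    (hX : MemLp X (.ofReal p) μ) {A : Set Ω} (hA : MeasurableSet A) :
    MemLp (A.indicator fun ω => ‖X ω‖ ^ (p - 2) • X ω) (.ofReal q) μ := by
  have hp₁ : 0 < p - 1 := sub_pos.2 hpq.lt
  have hXp : MemLp (fun ω => ‖X ω‖ ^ (p - 1)) (.ofReal q) μ := by
    have := hX.norm_rpow_div (.ofReal (p - 1))
    rwa [ENNReal.toReal_ofReal hp₁.le, ← ENNReal.ofReal_div_of_pos hp₁, ← hpq.conjugate_eq] at this
  refine hXp.of_le (((hX.1.norm.aemeasurable.pow_const _).aestronglyMeasurable.smul hX.1).indicator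
    hA) (.of_forall fun ω => ?_)
  by_cases hω : ω ∈ A
  · simp [Set.indicator_of_mem hω, norm_rpow_smul_self hpq.lt.ne' (X ω), le_abs_self]
  · simp [Set.indicator_of_notMem hω]

theorem eLpNorm_indicator_rpow_smul_self_rpow {p q : ℝ} (hpq : p.HolderConjugate q)
    (X : Ω → E) (A : Set Ω) :
    eLpNorm (A.indicator fun ω => ‖X ω‖ ^ (p - 2) • X ω) (.ofReal q) μ ^ q =
      eLpNorm (A.indicator fun ω => ‖X ω‖ ^ p) 1 μ := by
  have hq := hpq.symm.pos
  rw [← one_mul (ENNReal.ofReal q), ← eLpNorm_norm_rpow _ hq]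
  congr 1; funext ω
  by_cases hω : ω ∈ A
  · simp [Set.indicator_of_mem hω, norm_rpow_smul_self hpq.lt.ne' (X ω),
      ← Real.rpow_mul (norm_nonneg _), hpq.sub_one_mul_conj]
  · simp [Set.indicator_of_notMem hω, Real.zero_rpow hq.ne']

theorem ofReal_le_rpow_of_forall_eLpNorm_condExp_inner_le (hm : m ≤ m0)
    [SigmaFinite (μ.trim hm)] {p q : ℝ} (hpq : p.HolderConjugate q) {X : Ω → E}
    (hX : MemLp X (.ofReal p) μ) {C : ℝ≥0∞}
    (hC : ∀ Y : Ω → E, MemLp Y (.ofReal q) μ →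
      eLpNorm (μ[fun ω => ⟪X ω, Y ω⟫ | m]) (.ofReal q) μ ≤ C * eLpNorm Y (.ofReal q) μ)
    {t : ℝ} (ht : 0 < t) (hμt : μ {ω | t < μ[fun ω => ‖X ω‖ ^ p | m] ω} ≠ 0) :
    ENNReal.ofReal t ≤ C ^ p := by
  have hp := hpq.pos
  have hq := hpq.symm.pos
  have intX := hX.integrable_norm_rpow_ofReal hp
  set g := μ[fun ω => ‖X ω‖ ^ p | m]
  set A := {ω | t < g ω}
  have hA : MeasurableSet[m] A :=
    measurableSet_lt measurable_const stronglyMeasurable_condExp.measurable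
  set Y := A.indicator fun ω => ‖X ω‖ ^ (p - 2) • X ω
  set J := eLpNorm (A.indicator fun ω => ‖X ω‖ ^ p) 1 μ
  have hcond : μ[fun ω => ⟪X ω, Y ω⟫ | m] =ᵐ[μ] A.indicator g := by
    have : (fun ω => ⟪X ω, Y ω⟫) = A.indicator fun ω => ‖X ω‖ ^ p := by
      funext ω
      by_cases hω : ω ∈ A
      · simp [Y, Set.indicator_of_mem hω, real_inner_rpow_smul_self hp.ne']
      · simp [Y, Set.indicator_of_notMem hω]
    rw [this]; exact condExp_indicator intX hA
  have hJ : eLpNorm (A.indicator g) 1 μ = J := by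
    rw [← eLpNorm_congr_ae (condExp_indicator intX hA),
      eLpNorm_one_condExp_of_nonneg hm (intX.indicator (hm _ hA))]
    exact .of_forall (Set.indicator_nonneg fun ω _ => by positivity)
  have hJ₀ : J ≠ 0 := by
    rw [← hJ, Ne, eLpNorm_eq_zero_iff
      ((stronglyMeasurable_condExp.mono hm).indicator (hm _ hA)).aestronglyMeasurable one_ne_zero]
    refine fun h => hμt (measure_eq_zero_iff_ae_notMem.2 ?_)
    filter_upwards [h] with ω hω hωA
    rw [Pi.zero_apply, Set.indicator_of_mem hωA] at hω
    exact (ht.trans (hω ▸ hωA : t < 0)).false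
  have hJ_top : J ≠ ∞ :=
    (memLp_one_iff_integrable.2 (intX.indicator (hm _ hA))).eLpNorm_ne_top
  have key : ENNReal.ofReal t ^ (q - 1) * J ≤ C ^ q * J := calc
    ENNReal.ofReal t ^ (q - 1) * J ≤ eLpNorm (A.indicator g) (.ofReal q) μ ^ q :=
      hJ ▸ ofReal_rpow_mul_eLpNorm_one_le_eLpNorm_rpow ht.le hpq.symm.lt.le fun ω hω => hω.le
    _ = eLpNorm (μ[fun ω => ⟪X ω, Y ω⟫ | m]) (.ofReal q) μ ^ q := by rw [eLpNorm_congr_ae hcond]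
    _ ≤ (C * eLpNorm Y (.ofReal q) μ) ^ q := by
      gcongr; exact hC Y (memLp_indicator_rpow_smul_self hpq hX (hm _ hA))
    _ = C ^ q * J := by
      rw [ENNReal.mul_rpow_of_nonneg _ _ hq.le, eLpNorm_indicator_rpow_smul_self_rpow hpq]
  calc ENNReal.ofReal t = (ENNReal.ofReal t ^ (q - 1)) ^ (p / q) := by
        rw [← ENNReal.rpow_mul, show (q - 1) * (p / q) = 1 by
          field_simp; linear_combination hpq.mul_eq_add, ENNReal.rpow_one]
    _ ≤ (C ^ q) ^ (p / q) := by gcongr; exact (ENNReal.mul_le_mul_iff_left hJ₀ hJ_top).1 key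
    _ = C ^ p := by rw [← ENNReal.rpow_mul, mul_div_cancel₀ _ hq.ne']

theorem essSup_rpow_le_of_forall_eLpNorm_condExp_inner_le (hm : m ≤ m0)
    [SigmaFinite (μ.trim hm)] {p q : ℝ} (hpq : p.HolderConjugate q) {X : Ω → E}
    (hX : MemLp X (.ofReal p) μ) {C : ℝ≥0∞}
    (hC : ∀ Y : Ω → E, MemLp Y (.ofReal q) μ →
      eLpNorm (μ[fun ω => ⟪X ω, Y ω⟫ | m]) (.ofReal q) μ ≤ C * eLpNorm Y (.ofReal q) μ) :
    essSup (fun ω => ENNReal.ofReal (μ[fun ω => ‖X ω‖ ^ p | m] ω)) μ ^ (1 / p) ≤ C := by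
  have hp := hpq.pos
  suffices essSup (fun ω => ENNReal.ofReal (μ[fun ω => ‖X ω‖ ^ p | m] ω)) μ ≤ C ^ p by
    calc _ ≤ (C ^ p) ^ (1 / p) := by gcongr
      _ = C := by rw [← ENNReal.rpow_mul, mul_one_div_cancel hp.ne', ENNReal.rpow_one]
  by_contra! hlt
  obtain ⟨c, hCc, hc⟩ := exists_between hlt
  have hc_top : c ≠ ∞ := hc.ne_top
  have hμc : μ {ω | c.toReal < μ[fun ω => ‖X ω‖ ^ p | m] ω} ≠ 0 := by
    refine fun h₀ => hc.not_ge (essSup_le_of_ae_le _ ?_)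
    filter_upwards [measure_eq_zero_iff_ae_notMem.1 h₀] with ω hω
    exact (ENNReal.ofReal_le_ofReal (not_lt.1 hω)).trans_eq (ENNReal.ofReal_toReal hc_top)
  have := ofReal_le_rpow_of_forall_eLpNorm_condExp_inner_le hm hpq hX hC
    (ENNReal.toReal_pos (bot_le.trans_lt hCc).ne' hc_top) hμc
  rw [ENNReal.ofReal_toReal hc_top] at this
  exact this.not_gt hCc
end

/-- **Conditional duality lemma, case `1 < p < ∞`.**
The essential supremum of `E[|X|^p | G]^{1/p}` is the least constant `C` such that
`‖E[X · Y | G]‖_{L^q} ≤ C ‖Y‖_{L^q}` for all `ℝⁿ`-valued `Y ∈ L^q`. -/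
theorem stmt0 {Ω : Type*} {m0 : MeasurableSpace Ω} (μ : Measure Ω) [IsProbabilityMeasure μ]
    (G : MeasurableSpace Ω) (hG : G ≤ m0) (n : ℕ)
    (p q : ℝ) (hpq : Real.HolderConjugate p q)
    (X : Ω → EuclideanSpace ℝ (Fin n))
    (hX : MemLp X (ENNReal.ofReal p) μ) :
    IsLeast
      {C : ℝ≥0∞ |
        ∀ Y : Ω → EuclideanSpace ℝ (Fin n), MemLp Y (ENNReal.ofReal q) μ →
          eLpNorm (μ[fun ω => ⟪X ω, Y ω⟫ | G]) (ENNReal.ofReal q) μ ≤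
            C * eLpNorm Y (ENNReal.ofReal q) μ}
      ((essSup (fun ω => ENNReal.ofReal ((μ[fun ω => ‖X ω‖ ^ p | G]) ω)) μ) ^ (1 / p)) :=
  ⟨fun _ hY => eLpNorm_condExp_inner_le_essSup_mul hG hpq hX hY,
    fun _ hC => essSup_rpow_le_of_forall_eLpNorm_condExp_inner_le hG hpq hX hC⟩
end

section
/- Let (Ω, F, P) be a probability space, G a sub-σ-algebra, 1 < p < ∞ with conjugate q, and X an ℝⁿ-valued random vector in L^p. If C satisfies ‖E[X · Y | G]‖_{L^q} ≤ C ‖Y‖_{L^q} for all Y ∈ L^q(Ω; ℝⁿ), then for every a > 0 with P[E[|X|^p | G] > a] > 0 one has a ≤ C^p; consequently E[|X|^p | G] ≤ C^p almost surely. -/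
open MeasureTheory Filter
open scoped ENNReal RealInnerProductSpace

/-!
Let `f = E[|X|^p | G]`, `S = {f > a} ∈ G` and test the hypothesis against
`Y = 1_S |X|^{p-2} X`. Then `X · Y = 1_S |X|^p`, so `E[X · Y | G] = 1_S f`, and
`|Y|^q = 1_S |X|^p`.
With `B = ∫_S |X|^p = ∫_S f ≥ a P(S) > 0` this gives
`a^{q-1} B ≤ ∫_S f^q ≤ C^q ‖Y‖_q^q = C^q B`, hence `a^{q-1} ≤ C^q`, i.e. `a ≤ C^p`.
Letting `a` decrease to `C^p` yields the almost sure bound.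
-/

section DualityMap

variable {E : Type*} [NormedAddCommGroup E] [InnerProductSpace ℝ E]

/-- The paper's `|x|^{p/q - 1} x`: for conjugate exponents `p / q = p - 1`. -/
noncomputable def dualityMap (p : ℝ) (x : E) : E := ‖x‖ ^ (p - 2) • x

theorem inner_dualityMap {p : ℝ} (hp : p ≠ 0) (x : E) :
    ⟪x, dualityMap p x⟫ = ‖x‖ ^ p := by
  rcases eq_or_ne x 0 with rfl | hx
  · simp [dualityMap, Real.zero_rpow hp]
  · rw [dualityMap, real_inner_smul_right, real_inner_self_eq_norm_sq, ← Real.rpow_natCast,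
      ← Real.rpow_add (norm_pos_iff.2 hx)]
    norm_num

theorem norm_dualityMap {p : ℝ} (hp : p ≠ 1) (x : E) :
    ‖dualityMap p x‖ = ‖x‖ ^ (p - 1) := by
  rcases eq_or_ne x 0 with rfl | hx
  · simp [dualityMap, Real.zero_rpow (sub_ne_zero.2 hp)]
  · rw [dualityMap, norm_smul, Real.norm_of_nonneg (by positivity),
      ← Real.rpow_add_one (norm_ne_zero_iff.2 hx)]
    ring_nf

theorem norm_dualityMap_rpow {p q : ℝ} (hpq : p.HolderConjugate q) (x : E) :
    ‖dualityMap p x‖ ^ q = ‖x‖ ^ p := by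
  rw [norm_dualityMap hpq.lt.ne', ← Real.rpow_mul (norm_nonneg x), hpq.sub_one_mul_conj]

theorem MeasureTheory.MemLp.dualityMap {Ω : Type*} {m0 : MeasurableSpace Ω} {μ : Measure Ω}
    {p q : ℝ} (hpq : p.HolderConjugate q) {X : Ω → E} (hX : MemLp X (ENNReal.ofReal p) μ) :
    MemLp (fun ω => dualityMap p (X ω)) (ENNReal.ofReal q) μ := by
  have hXq : MemLp (fun ω => ‖X ω‖ ^ (p - 1)) (ENNReal.ofReal q) μ := by
    have := hX.norm_rpow_div (ENNReal.ofReal (p - 1))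
    rwa [ENNReal.toReal_ofReal hpq.sub_one_pos.le, ← ENNReal.ofReal_div_of_pos hpq.sub_one_pos,
      ← hpq.conjugate_eq] at this
  refine hXq.of_le ?_ (ae_of_all _ fun ω => ?_)
  · exact (hX.1.norm.aemeasurable.pow_const _).aestronglyMeasurable.smul hX.1
  · rw [norm_dualityMap hpq.lt.ne', Real.norm_of_nonneg (by positivity)]

end DualityMap

section LpNorm

variable {Ω F : Type*} {m0 : MeasurableSpace Ω} {μ : Measure Ω} [NormedAddCommGroup F]
  {q : ℝ} {f : Ω → F} {g : Ω → ℝ}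

theorem eLpNorm_ofReal_rpow_eq_lintegral (hq : 0 < q) :
    eLpNorm f (ENNReal.ofReal q) μ ^ q = ∫⁻ ω, ENNReal.ofReal (‖f ω‖ ^ q) ∂μ := by
  rw [eLpNorm_eq_eLpNorm' (by simpa using hq) ENNReal.ofReal_ne_top, ENNReal.toReal_ofReal hq.le,
    ← lintegral_rpow_enorm_eq_rpow_eLpNorm' hq]
  simp_rw [← ofReal_norm, ENNReal.ofReal_rpow_of_nonneg (norm_nonneg _) hq.le]

theorem eLpNorm_ofReal_rpow_eq_ofReal_integral (hq : 0 < q) (hg : Integrable g μ)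
    (hfg : ∀ ω, ‖f ω‖ ^ q = g ω) :
    eLpNorm f (ENNReal.ofReal q) μ ^ q = ENNReal.ofReal (∫ ω, g ω ∂μ) := by
  have hg0 : 0 ≤ g := fun ω => hfg ω ▸ by positivity
  rw [eLpNorm_ofReal_rpow_eq_lintegral hq,
    ofReal_integral_eq_lintegral_ofReal hg (ae_of_all _ hg0)]
  simp_rw [hfg]

theorem ofReal_integral_le_eLpNorm_ofReal_rpow (hq : 0 < q) (hg : Integrable g μ)
    (hg0 : 0 ≤ g) (hgf : ∀ ω, g ω ≤ ‖f ω‖ ^ q) :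
    ENNReal.ofReal (∫ ω, g ω ∂μ) ≤ eLpNorm f (ENNReal.ofReal q) μ ^ q := by
  rw [eLpNorm_ofReal_rpow_eq_lintegral hq,
    ofReal_integral_eq_lintegral_ofReal hg (ae_of_all _ hg0)]
  exact lintegral_mono fun ω => ENNReal.ofReal_le_ofReal (hgf ω)

theorem ofReal_rpow_sub_one_mul_setIntegral_le_eLpNorm_indicator {S : Set Ω} {f : Ω → ℝ}
    {a : ℝ} (hS : MeasurableSet S) (hf : IntegrableOn f S μ) (ha : 0 ≤ a) (hq : 1 ≤ q)
    (hfa : ∀ ω ∈ S, a ≤ f ω) :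
    ENNReal.ofReal (a ^ (q - 1) * ∫ ω in S, f ω ∂μ) ≤
      eLpNorm (S.indicator f) (ENNReal.ofReal q) μ ^ q := by
  rw [← integral_indicator hS, ← integral_const_mul]
  refine ofReal_integral_le_eLpNorm_ofReal_rpow (by linarith)
    ((hf.integrable_indicator hS).const_mul _)
    (fun ω => mul_nonneg (Real.rpow_nonneg ha _)
      (Set.indicator_nonneg (fun ω hω => ha.trans (hfa ω hω)) ω)) (fun ω => ?_)
  by_cases hω : ω ∈ S
  · have hfω : 0 ≤ f ω := ha.trans (hfa ω hω)
    rw [Set.indicator_of_mem hω, Real.norm_of_nonneg hfω]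
    calc a ^ (q - 1) * f ω ≤ f ω ^ (q - 1) * f ω :=
          mul_le_mul_of_nonneg_right (Real.rpow_le_rpow ha (hfa ω hω) (by linarith)) hfω
      _ = f ω ^ q := by rw [← Real.rpow_add_one' hfω (by linarith), sub_add_cancel]
  · simp [hω, Real.zero_rpow (by linarith : q ≠ 0)]

end LpNorm

theorem Real.le_rpow_of_rpow_sub_one_le {p q a C : ℝ} (hpq : p.HolderConjugate q) (ha : 0 ≤ a)
    (hC : 0 ≤ C) (h : a ^ (q - 1) ≤ C ^ q) : a ≤ C ^ p := calc
  a = (a ^ (q - 1)) ^ (p - 1) := by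
    rw [← Real.rpow_mul ha, show (q - 1) * (p - 1) = 1 by
      linear_combination hpq.symm.sub_one_mul_conj, Real.rpow_one]
  _ ≤ (C ^ q) ^ (p - 1) := by gcongr; exact hpq.sub_one_pos.le
  _ = C ^ p := by rw [← Real.rpow_mul hC, mul_comm, hpq.sub_one_mul_conj]

theorem MeasureTheory.ae_le_of_forall_lt_measure_setOf_lt_eq_zero {Ω : Type*}
    {m0 : MeasurableSpace Ω} {μ : Measure Ω} {f : Ω → ℝ} {c : ℝ}
    (h : ∀ a, c < a → μ {ω | a < f ω} = 0) :
    ∀ᵐ ω ∂μ, f ω ≤ c := by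
  obtain ⟨u, -, hu_gt, hu⟩ := exists_seq_strictAnti_tendsto c
  have hle : ∀ᵐ ω ∂μ, ∀ k, f ω ≤ u k :=
    ae_all_iff.2 fun k => by simpa only [ae_iff, not_le] using h _ (hu_gt k)
  filter_upwards [hle] with ω hω using ge_of_tendsto' hu hω

section CondExp

variable {Ω E : Type*} {m0 : MeasurableSpace Ω} {μ : Measure Ω} {G : MeasurableSpace Ω}
  [NormedAddCommGroup E] [InnerProductSpace ℝ E] {X : Ω → E} {p q : ℝ} {S : Set Ω}

theorem condExp_inner_indicator_dualityMap (hp : p ≠ 0)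
    (hX : Integrable (fun ω => ‖X ω‖ ^ p) μ) (hS : MeasurableSet[G] S) :
    μ[fun ω => ⟪X ω, S.indicator (fun ω => dualityMap p (X ω)) ω⟫ | G] =ᵐ[μ]
      S.indicator (μ[fun ω => ‖X ω‖ ^ p | G]) := by
  have : (fun ω => ⟪X ω, S.indicator (fun ω => dualityMap p (X ω)) ω⟫) =
      S.indicator fun ω => ‖X ω‖ ^ p := by
    ext ω
    by_cases hω : ω ∈ S <;> simp [hω, inner_dualityMap hp]
  rw [this]
  exact condExp_indicator hX hS

theorem le_rpow_of_measure_setOf_lt_condExp_ne_zero [IsFiniteMeasure μ] (hG : G ≤ m0)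
    (hpq : p.HolderConjugate q) (hX : MemLp X (ENNReal.ofReal p) μ) {C : ℝ} (hC0 : 0 ≤ C)
    (hC : ∀ Y : Ω → E, MemLp Y (ENNReal.ofReal q) μ →
      eLpNorm (μ[fun ω => ⟪X ω, Y ω⟫ | G]) (ENNReal.ofReal q) μ ≤
        ENNReal.ofReal C * eLpNorm Y (ENNReal.ofReal q) μ)
    {a : ℝ} (ha : 0 < a) (hμ : μ {ω | a < (μ[fun ω => ‖X ω‖ ^ p | G]) ω} ≠ 0) :
    a ≤ C ^ p := by
  have hq : 0 < q := hpq.symm.pos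
  set f := μ[fun ω => ‖X ω‖ ^ p | G]
  set S := {ω | a < f ω}
  set Y := S.indicator fun ω => dualityMap p (X ω)
  have hint : Integrable (fun ω => ‖X ω‖ ^ p) μ := by
    simpa [ENNReal.toReal_ofReal hpq.pos.le] using
      hX.integrable_norm_rpow (by simpa using hpq.pos) ENNReal.ofReal_ne_top
  have hSG : MeasurableSet[G] S :=
    measurableSet_lt measurable_const stronglyMeasurable_condExp.measurable
  have hS : MeasurableSet[m0] S := hG _ hSG
  set B := ∫ ω in S, ‖X ω‖ ^ p ∂μ
  have hfB : ∫ ω in S, f ω ∂μ = B := setIntegral_condExp hG hint hSG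
  have hB : 0 < B := by
    have hSa : a * μ.real S ≤ ∫ ω in S, f ω ∂μ :=
      setIntegral_ge_of_const_le_real hS (measure_ne_top μ S) (fun ω hω => le_of_lt hω)
        integrable_condExp.integrableOn
    have hμS : 0 < μ.real S := ENNReal.toReal_pos hμ (measure_ne_top μ S)
    rw [hfB] at hSa
    nlinarith
  have hY : eLpNorm Y (ENNReal.ofReal q) μ ^ q = ENNReal.ofReal B := by
    rw [eLpNorm_ofReal_rpow_eq_ofReal_integral hq (hint.indicator hS) fun ω => ?_,
      integral_indicator hS]
    by_cases hω : ω ∈ S <;> simp [Y, hω, norm_dualityMap_rpow hpq, Real.zero_rpow hq.ne']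
  have hlow :
      ENNReal.ofReal (a ^ (q - 1) * B) ≤ eLpNorm (S.indicator f) (ENNReal.ofReal q) μ ^ q :=
    hfB ▸ ofReal_rpow_sub_one_mul_setIntegral_le_eLpNorm_indicator hS
      integrable_condExp.integrableOn ha.le hpq.symm.lt.le fun ω hω => le_of_lt hω
  have hup :
      eLpNorm (S.indicator f) (ENNReal.ofReal q) μ ^ q ≤ ENNReal.ofReal (C ^ q * B) := by
    rw [← eLpNorm_congr_ae (condExp_inner_indicator_dualityMap hpq.ne_zero hint hSG)]
    calc _ ≤ (ENNReal.ofReal C * eLpNorm Y (ENNReal.ofReal q) μ) ^ q := by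
          gcongr
          exact hC Y ((hX.dualityMap hpq).indicator hS)
      _ = _ := by
        rw [ENNReal.mul_rpow_of_nonneg _ _ hq.le, hY, ENNReal.ofReal_rpow_of_nonneg hC0 hq.le,
          ENNReal.ofReal_mul (by positivity)]
  have hB' : a ^ (q - 1) * B ≤ C ^ q * B :=
    (ENNReal.ofReal_le_ofReal_iff (by positivity)).1 (hlow.trans hup)
  exact Real.le_rpow_of_rpow_sub_one_le hpq ha.le hC0 (le_of_mul_le_mul_right hB' hB)

end CondExp

/-- **Conditional duality lemma, lower bound, `1 < p < ∞`.**
If `‖E[X · Y | G]‖_{L^q} ≤ C ‖Y‖_{L^q}` for all `Y ∈ L^q(Ω; ℝⁿ)`, then for every `a > 0`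
with `P[E[|X|^p | G] > a] > 0` one has `a ≤ C^p`; consequently `E[|X|^p | G] ≤ C^p` a.s. -/
theorem stmt2 {Ω : Type*} {m0 : MeasurableSpace Ω} (μ : Measure Ω) [IsProbabilityMeasure μ]
    (G : MeasurableSpace Ω) (hG : G ≤ m0) (n : ℕ)
    (p q : ℝ) (hpq : Real.HolderConjugate p q)
    (X : Ω → EuclideanSpace ℝ (Fin n)) (hX : MemLp X (ENNReal.ofReal p) μ)
    (C : ℝ) (hC0 : 0 ≤ C)
    (hC : ∀ Y : Ω → EuclideanSpace ℝ (Fin n), MemLp Y (ENNReal.ofReal q) μ →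
      eLpNorm (μ[fun ω => ⟪X ω, Y ω⟫ | G]) (ENNReal.ofReal q) μ ≤
        ENNReal.ofReal C * eLpNorm Y (ENNReal.ofReal q) μ) :
    (∀ a : ℝ, 0 < a → μ {ω | a < (μ[fun ω => ‖X ω‖ ^ p | G]) ω} ≠ 0 → a ≤ C ^ p) ∧
      ∀ᵐ ω ∂μ, (μ[fun ω => ‖X ω‖ ^ p | G]) ω ≤ C ^ p := by
  have key {a : ℝ} (ha : 0 < a) := le_rpow_of_measure_setOf_lt_condExp_ne_zero hG hpq hX hC0 hC ha
  refine ⟨fun a ha => key ha, ae_le_of_forall_lt_measure_setOf_lt_eq_zero fun a ha => ?_⟩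
  by_contra hμ
  exact (key ((Real.rpow_nonneg hC0 p).trans_lt ha) hμ).not_gt ha
end
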